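/- Let π > 0, let j(x) = x √(4x + π² x⁴) − π x³ for x > 0 (so that j(x) > 0 for x > 0), and define ρ_π : (0, ∞) → ℝ by ρ_π(x) = 4/√(j(x)) + π √(j(x)). Then ρ_π is strictly decreasing on (0, ∞), ρ_π(x) > 3√(2π) for every x > 0, and ρ_π(x) → 3√(2π) as x → ∞. -/

import Mathlib

noncomputable section

/-- The function `j(x) = x√(4x + π²x⁴) − πx³`. -/
def jfun (π x : ℝ) : ℝ := x * Real.sqrt (4 * x + π ^ 2 * x ^ 4) - π * x ^ 3

/-- The profile `ρ_π(x) = 4/√(j(x)) + π√(j(x))`. -/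
def rhofun (π x : ℝ) : ℝ :=
  4 / Real.sqrt (jfun π x) + π * Real.sqrt (jfun π x)

/-! Rationalising, `j(x) = 4 / (√(4/x³ + π²) + π)`, which increases strictly from `0` to
`2/π` on `(0, ∞)`. Hence `ρ_π = g ∘ j` with `g(u) = 4/√u + π√u`, and `g` is strictly
decreasing on `(0, 4/π]` (its minimum is at `u = 4/π`), so `ρ_π` decreases strictly to
`g(2/π) = 3√(2π)`. -/

open Set Filter Topology

lemma sqrt_add_sq_add_pos (a : ℝ) {d : ℝ} (hd : 0 < d) : 0 < √(d + a ^ 2) + a := by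
  have : -a < √(d + a ^ 2) := Real.lt_sqrt_of_sq_lt (by nlinarith)
  linarith

lemma jfun_eq_div (π : ℝ) {x : ℝ} (hx : 0 < x) :
    jfun π x = 4 / (√(4 / x ^ 3 + π ^ 2) + π) := by
  set u := 4 / x ^ 3 + π ^ 2 with hu_def
  have hden : 0 < √u + π := sqrt_add_sq_add_pos π (by positivity)
  have hsqrt : √(4 * x + π ^ 2 * x ^ 4) = x ^ 2 * √u := by
    rw [show 4 * x + π ^ 2 * x ^ 4 = (x ^ 2) ^ 2 * u by rw [hu_def]; field_simp,
      Real.sqrt_mul (by positivity), Real.sqrt_sq (by positivity)]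
  have hu : x ^ 3 * (√u * √u) = 4 + π ^ 2 * x ^ 3 := by
    rw [Real.mul_self_sqrt (by positivity), hu_def]; field_simp
  rw [jfun, hsqrt, eq_div_iff hden.ne']
  linear_combination hu

lemma jfun_pos (π : ℝ) {x : ℝ} (hx : 0 < x) : 0 < jfun π x := by
  rw [jfun_eq_div π hx]
  exact div_pos four_pos (sqrt_add_sq_add_pos π (by positivity))

lemma strictMonoOn_jfun (π : ℝ) : StrictMonoOn (jfun π) (Ioi 0) := by
  intro x (hx : 0 < x) y (hy : 0 < y) hxy
  rw [jfun_eq_div π hx, jfun_eq_div π hy]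
  gcongr
  exact sqrt_add_sq_add_pos π (by positivity)

lemma jfun_lt (π : ℝ) (hπ : 0 < π) {x : ℝ} (hx : 0 < x) : jfun π x < 2 / π := by
  have : π < √(4 / x ^ 3 + π ^ 2) :=
    Real.lt_sqrt_of_sq_lt (lt_add_of_pos_left _ (by positivity))
  calc jfun π x = 4 / (√(4 / x ^ 3 + π ^ 2) + π) := jfun_eq_div π hx
    _ < 4 / (π + π) := by gcongr
    _ = 2 / π := by ring

lemma tendsto_jfun_atTop (π : ℝ) (hπ : 0 < π) : Tendsto (jfun π) atTop (𝓝 (2 / π)) := by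
  have h0 : Tendsto (fun x : ℝ => 4 / x ^ 3) atTop (𝓝 0) :=
    tendsto_const_nhds.div_atTop (tendsto_pow_atTop three_ne_zero)
  have hden : Tendsto (fun x : ℝ => √(4 / x ^ 3 + π ^ 2) + π) atTop (𝓝 (2 * π)) := by
    have := ((h0.add_const (π ^ 2)).sqrt).add_const π
    rwa [zero_add, Real.sqrt_sq hπ.le, ← two_mul] at this
  have hlim := (tendsto_const_nhds (x := (4 : ℝ))).div hden (by positivity)
  rw [show (4 : ℝ) / (2 * π) = 2 / π by ring] at hlim
  exact hlim.congr' <| (eventually_gt_atTop 0).mono fun x hx => (jfun_eq_div π hx).symm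

lemma strictAntiOn_div_sqrt_add_mul_sqrt {a c : ℝ} (hc : 0 < c) :
    StrictAntiOn (fun u => a / √u + c * √u) (Ioc 0 (a / c)) := by
  rintro u ⟨hu, -⟩ v ⟨hv, hva⟩ huv
  have hsu : 0 < √u := Real.sqrt_pos.2 hu
  have hsuv : √u < √v := Real.sqrt_lt_sqrt hu.le huv
  have hprod : c * (√u * √v) < a := by
    have : √u * √v < a / c := calc
      √u * √v < √v * √v := by gcongr
      _ = v := Real.mul_self_sqrt hv.le
      _ ≤ a / c := hva
    rwa [lt_div_iff₀' hc] at this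
  have key : a / √u + c * √u - (a / √v + c * √v)
      = (√v - √u) * (a - c * (√u * √v)) / (√u * √v) := by
    field_simp
    ring
  have : 0 < (√v - √u) * (a - c * (√u * √v)) / (√u * √v) := by
    apply div_pos (mul_pos (by linarith) (by linarith)) (by positivity)
  dsimp only
  linarith

lemma div_sqrt_add_mul_sqrt_two_div (π : ℝ) (hπ : 0 < π) :
    4 / √(2 / π) + π * √(2 / π) = 3 * √(2 * π) := by
  have hs : 0 < √(2 / π) := Real.sqrt_pos.2 (by positivity)
  have hsq : √(2 / π) ^ 2 = 2 / π := Real.sq_sqrt (by positivity)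
  have h2π : √(2 * π) = π * √(2 / π) := by
    rw [show 2 * π = π ^ 2 * (2 / π) by field_simp, Real.sqrt_mul (by positivity),
      Real.sqrt_sq hπ.le]
  rw [h2π]
  field_simp
  rw [hsq]
  field_simp
  ring

/-- For `π > 0`: `j > 0` on `(0,∞)`, `ρ_π` is strictly decreasing on `(0,∞)`, strictly larger
than `3√(2π)` there, and tends to `3√(2π)` at infinity. -/
theorem stmt13 (π : ℝ) (hπ : 0 < π) :
    (∀ x : ℝ, 0 < x → 0 < jfun π x) ∧
    StrictAntiOn (rhofun π) (Set.Ioi 0) ∧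
    (∀ x : ℝ, 0 < x → 3 * Real.sqrt (2 * π) < rhofun π x) ∧
    Filter.Tendsto (rhofun π) Filter.atTop (nhds (3 * Real.sqrt (2 * π))) := by
  set g : ℝ → ℝ := fun u => 4 / √u + π * √u
  have hρ : rhofun π = g ∘ jfun π := rfl
  have hg : StrictAntiOn g (Ioc 0 (4 / π)) := strictAntiOn_div_sqrt_add_mul_sqrt hπ
  have h24 : 2 / π ≤ 4 / π := by gcongr; norm_num
  have hj : MapsTo (jfun π) (Ioi 0) (Ioc 0 (4 / π)) :=
    fun x hx => ⟨jfun_pos π hx, (jfun_lt π hπ hx).le.trans h24⟩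
  have hg_lim : g (2 / π) = 3 * √(2 * π) := div_sqrt_add_mul_sqrt_two_div π hπ
  have hg_cont : ContinuousAt g (2 / π) := by
    fun_prop (disch := exact (Real.sqrt_pos.2 (by positivity)).ne')
  refine ⟨fun x hx => jfun_pos π hx, hg.comp_strictMonoOn (strictMonoOn_jfun π) hj,
    fun x hx => ?_, ?_⟩
  · rw [← hg_lim]
    exact hg (hj hx) ⟨by positivity, h24⟩ (jfun_lt π hπ hx)
  · rw [hρ, ← hg_lim]
    exact hg_cont.tendsto.comp (tendsto_jfun_atTop π hπ)
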